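/- arXiv:2011.10963 — 9 statements merged into one kernel-verified Lean document; each statement's English description precedes it below -/
import Mathlib

section
/- For k = 4, the function H(x) := f_4(x)/2 is a weighting function, i.e., T_4 ≤ 2: for any finite list x₁,...,xₘ ∈ [0,1] with Σxᵢ ≤ 1, we have Σ f_4(xᵢ) ≤ 2. -/
/-- The harmonic rounding function `f_k`: for `x ∈ (1/(q+1), 1/q]` with
`q ∈ {1,…,k-1}` we have `⌊1/x⌋ = q` and `f_k x = 1/q`; for `x ≤ 1/k`,
`f_k x = (k/(k-2))·x`.  For `k = 4` this is `f_4 x = 2x` for `x ≤ 1/4`. -/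
noncomputable def fk (k : ℕ) (x : ℝ) : ℝ :=
  if x ≤ 1 / k then (k / ((k : ℝ) - 2)) * x else 1 / (⌊1 / x⌋ : ℝ)

lemma fk4_le (x : ℝ) (h0 : 0 ≤ x) (h1 : x ≤ 1) : fk 4 x ≤ 2 * x := by
  unfold fk
  split_ifs with h
  · norm_num
  · push_neg at h
    have h' : (1:ℝ)/4 < x := by norm_num at h ⊢; linarith
    have hx : (0:ℝ) < x := by linarith
    have ht : (1:ℝ) ≤ 1/x := by rw [le_div_iff₀ hx]; linarith
    have hq : (1:ℤ) ≤ ⌊1/x⌋ := Int.le_floor.mpr (by exact_mod_cast ht)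
    have hqr : (1:ℝ) ≤ (⌊1/x⌋ : ℝ) := by exact_mod_cast hq
    have h2 : 1/x < (⌊1/x⌋:ℝ) + 1 := Int.lt_floor_add_one _
    have h3 : 1 < x * ((⌊1/x⌋:ℝ) + 1) := by
      have := (div_lt_iff₀ hx).mp h2
      linarith
    rw [div_le_iff₀ (by linarith : (0:ℝ) < (⌊1/x⌋:ℝ))]
    nlinarith

lemma fk4_sum_le (l : List ℝ) (hl : ∀ x ∈ l, 0 ≤ x ∧ x ≤ 1) :
    (l.map (fk 4)).sum ≤ 2 * l.sum := by
  induction l with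
  | nil => simp
  | cons a t ih =>
    have ha := hl a (by simp)
    have ht := ih (fun x hx => hl x (by simp [hx]))
    simp only [List.map_cons, List.sum_cons, mul_add]
    exact add_le_add (fk4_le a ha.1 ha.2) ht

/-- `H(x) = f_4(x)/2` is a weighting function, i.e. `T_4 ≤ 2`. -/
theorem T4_le_two (l : List ℝ) (hl : ∀ x ∈ l, 0 ≤ x ∧ x ≤ 1) (hsum : l.sum ≤ 1) :
    (l.map (fk 4)).sum ≤ 2 := by
  have := fk4_sum_le l hl
  linarith
end

section
/- For k = 3, for any finite list x₁,...,xₘ ∈ [0,1] with Σxᵢ ≤ 1, we have Σ f_3(xᵢ) ≤ 3, i.e., T_3 ≤ 3. -/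
lemma fk3_le (x : ℝ) (h0 : 0 ≤ x) (h1 : x ≤ 1) : fk 3 x ≤ 3 * x := by
  unfold fk
  split_ifs with h
  · norm_num
  · push_neg at h
    have hx : (1:ℝ)/3 < x := by norm_num at h ⊢; linarith
    have hxpos : 0 < x := by linarith
    have hinv : (1:ℝ) ≤ 1 / x := by
      rw [le_div_iff₀ hxpos]; linarith
    have hfl : (1:ℤ) ≤ ⌊1 / x⌋ := by
      exact_mod_cast Int.le_floor.mpr (by exact_mod_cast hinv)
    have hflR : (1:ℝ) ≤ (⌊1 / x⌋ : ℝ) := by exact_mod_cast hfl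
    have : 1 / (⌊1 / x⌋ : ℝ) ≤ 1 := by
      rw [div_le_one (by linarith)]; linarith
    linarith

/-- `T_3 ≤ 3`. -/
theorem T3_le_three (l : List ℝ) (hl : ∀ x ∈ l, 0 ≤ x ∧ x ≤ 1) (hsum : l.sum ≤ 1) :
    (l.map (fk 3)).sum ≤ 3 := by
  have key : (l.map (fk 3)).sum ≤ 3 * l.sum := by
    induction l with
    | nil => simp
    | cons a t ih =>
      simp only [List.map_cons, List.sum_cons, mul_add]
      have ha := hl a (by simp)
      have := fk3_le a ha.1 ha.2
      have hts : t.sum ≤ 1 := by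
        simp only [List.sum_cons] at hsum; linarith [ha.1]
      have ht := ih (fun x hx => hl x (by simp [hx])) hts
      linarith
  linarith
end

section
/- In linear grouping, the up-rounded instance is a predecessor of the down-rounded instance together with the first group: J^(hi) ⪯ J^(lo) ∪ J₁^(hi), where ⪯ is the size-dominance injection relation on multisets of 1D items. -/
/-!
Rounding up sends every item of group `j + 1` to `h_{j+1}`, which is exactly the size that
rounding down gives the items of group `j`; since group `j + 1` has at most as many items as
group `j`, the item `i + q` of `J^(hi)` can be matched with the item `i` of `J^(lo)`. Only the
first group of `J^(hi)` is left over, and it is matched with `J₁^(hi)`.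
-/

/-- `MPred A B` : the multiset `A` of 1D item sizes is a predecessor of `B`,
i.e. there is an injection from `A` into `B` that does not decrease sizes. -/
def MPred (A B : Multiset ℝ) : Prop := ∃ C ≤ B, Multiset.Rel (· ≤ ·) A C

theorem MPred.of_le {A B : Multiset ℝ} (h : A ≤ B) : MPred A B :=
  ⟨A, h, Multiset.rel_refl_of_refl_on fun x _ => le_refl x⟩

theorem Multiset.range_eq_range_min_add_map (m q : ℕ) :
    range m = range (min q m) + (range (m - q)).map (q + ·) := by
  rcases le_total q m with h | h
  · rw [min_eq_left h, ← range_add, Nat.add_sub_cancel' h]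
  · rw [min_eq_right h, Nat.sub_eq_zero_of_le h, range_zero, map_zero, add_zero]

theorem Nat.mul_add_div_self_left (q i : ℕ) : q * ((q + i) / q) = q * (i / q + 1) := by
  rcases q.eq_zero_or_pos with rfl | hq
  · simp
  · rw [Nat.add_comm, Nat.add_div_right i hq]

theorem Multiset.range_sub_le_filter_next_group_lt (m q : ℕ) :
    range (m - q) ≤ (range m).filter (fun i => q * (i / q + 1) < m) := by
  rw [le_filter]
  refine ⟨range_le.mpr (m.sub_le q), fun i hi => ?_⟩
  have : q * (i / q) ≤ i := Nat.mul_div_le i q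
  rw [mem_range] at hi
  rw [Nat.mul_add, Nat.mul_one]
  omega

theorem map_range_roundUp_eq_firstGroup_add_shift (m q : ℕ) (s : ℕ → ℝ) :
    (Multiset.range m).map (fun i => s (q * (i / q))) =
      (Multiset.range (min q m)).map (fun _ => s 0) +
        (Multiset.range (m - q)).map (fun i => s (q * (i / q + 1))) := by
  rw [Multiset.range_eq_range_min_add_map m q, Multiset.map_add, Multiset.map_map]
  congr 1
  · refine Multiset.map_congr rfl fun i hi => ?_
    rw [Multiset.mem_range, lt_min_iff] at hi
    rw [Nat.div_eq_of_lt hi.1, Nat.mul_zero]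
  · exact Multiset.map_congr rfl fun i _ => congrArg s (Nat.mul_add_div_self_left q i)

theorem lingroup_pred_general (m q : ℕ) (s : ℕ → ℝ) :
    MPred ((Multiset.range m).map (fun i => s (q * (i / q))))
      ((((Multiset.range m).filter (fun i => q * (i / q + 1) < m)).map
          (fun i => s (q * (i / q + 1)))) +
        (Multiset.range (min q m)).map (fun _ => s 0)) := by
  rw [map_range_roundUp_eq_firstGroup_add_shift, add_comm]
  exact MPred.of_le <| add_le_add_left
    (Multiset.map_le_map (Multiset.range_sub_le_filter_next_group_lt m q)) _

/-- Linear grouping: items `0,…,m-1` have non-increasing sizes `s 0 ≥ s 1 ≥ …`;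
group of item `i` is `i / q` (0-indexed, each group has `q` items, the last
possibly fewer), the largest size in group `g` is `s (q*g)`.
`J^(hi)` rounds each item up to the largest size of its group;
`J^(lo)` rounds each item of every non-last group down to the largest size of
the next group; `J₁^(hi)` is the first group rounded up (all of size `s 0`).
Then `J^(hi) ⪯ J^(lo) ∪ J₁^(hi)`. -/
theorem lingroup_pred (m q : ℕ) (hq : 0 < q) (hm : 0 < m) (s : ℕ → ℝ)
    (hmono : ∀ i j, i ≤ j → j < m → s j ≤ s i) :
    MPred ((Multiset.range m).map (fun i => s (q * (i / q))))
      ((((Multiset.range m).filter (fun i => q * (i / q + 1) < m)).map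
          (fun i => s (q * (i / q + 1)))) +
        (Multiset.range (min q m)).map (fun _ => s 0)) :=
  lingroup_pred_general m q s
end

section
/- Canonical shelving size bound: if I is a finite multiset of rectangles each of width at most 1, and the canonical shelving packs them greedily (in non-increasing height order, slicing vertically) into tight shelves of width 1, then the total height of all shelves is strictly less than 1 plus the total area of the items: size(J) < 1 + a(I), where each shelf's height equals the height of its tallest item. -/
/-!
Every shelf but the last is full, and each of its slices is at least as tall as the next shelf, so
its area is at least the height of the next shelf. Summing, all shelf heights after the first are
paid for by the area of the shelves before them; the first height is at most `1`, and the last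
shelf contributes positive area that is not used, which makes the inequality strict.
-/

namespace Shelf

/-- The height of a tight shelf: the height of its first slice (`0` for an empty shelf). -/
def height (sh : List (ℝ × ℝ)) : ℝ := (sh.map Prod.snd).headI

def width (sh : List (ℝ × ℝ)) : ℝ := (sh.map Prod.fst).sum

def area (sh : List (ℝ × ℝ)) : ℝ := (sh.map fun p => p.1 * p.2).sum

lemma width_mul_le_area {sh : List (ℝ × ℝ)} {c : ℝ} (hw : ∀ p ∈ sh, 0 ≤ p.1)
    (hc : ∀ p ∈ sh, c ≤ p.2) : width sh * c ≤ area sh := by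
  rw [width, ← List.sum_map_mul_right, area]
  exact List.sum_le_sum fun p hp => mul_le_mul_of_nonneg_left (hc p hp) (hw p hp)

lemma area_pos {sh : List (ℝ × ℝ)} (hne : sh ≠ []) (hw : ∀ p ∈ sh, 0 < p.1)
    (hh : ∀ p ∈ sh, 0 < p.2) : 0 < area sh := by
  refine List.sum_pos _ ?_ (by simpa using hne)
  simp only [List.mem_map]
  rintro _ ⟨p, hp, rfl⟩
  exact mul_pos (hw p hp) (hh p hp)

lemma height_mem {sh : List (ℝ × ℝ)} (hne : sh ≠ []) : ∃ p ∈ sh, height sh = p.2 := by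
  obtain ⟨p, t, rfl⟩ := List.exists_cons_of_ne_nil hne
  exact ⟨p, List.mem_cons_self, rfl⟩

lemma height_le_of_pairwise {sh sh' : List (ℝ × ℝ)} {S : List (List (ℝ × ℝ))}
    (hsort : ((sh :: sh' :: S).flatten.map Prod.snd).Pairwise (· ≥ ·)) (hne : sh' ≠ []) :
    ∀ p ∈ sh, height sh' ≤ p.2 := by
  intro p hp
  obtain ⟨q, hq, hq_height⟩ := height_mem hne
  rw [List.flatten_cons, List.map_append, List.pairwise_append] at hsort
  rw [hq_height]
  exact hsort.2.2 p.2 (List.mem_map_of_mem hp) q.2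
    (List.mem_map_of_mem (List.mem_flatten_of_mem List.mem_cons_self hq))

lemma sum_height_lt {sh : List (ℝ × ℝ)} {S : List (List (ℝ × ℝ))}
    (hne : ∀ sh' ∈ sh :: S, sh' ≠ [])
    (hw : ∀ sh' ∈ sh :: S, ∀ p ∈ sh', 0 < p.1)
    (hh : ∀ sh' ∈ sh :: S, ∀ p ∈ sh', 0 < p.2)
    (hsort : ((sh :: S).flatten.map Prod.snd).Pairwise (· ≥ ·))
    (hfull : ∀ i, i + 1 < (sh :: S).length → width ((sh :: S).getD i []) = 1) :
    ((sh :: S).map height).sum < height sh + ((sh :: S).flatten.map fun p => p.1 * p.2).sum := by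
  induction S generalizing sh with
  | nil =>
    simpa [area] using area_pos (hne sh (by simp)) (hw sh (by simp)) (hh sh (by simp))
  | cons sh' S ih =>
    have ih' := ih (fun t ht => hne t (List.mem_cons_of_mem _ ht))
      (fun t ht => hw t (List.mem_cons_of_mem _ ht)) (fun t ht => hh t (List.mem_cons_of_mem _ ht))
      (by
        rw [List.flatten_cons, List.map_append, List.pairwise_append] at hsort
        exact hsort.2.1)
      (fun i hi => hfull (i + 1) (by simpa using hi))
    have h_width : width sh = 1 := hfull 0 (by simp)
    have h_area : height sh' ≤ area sh := by
      simpa [h_width] using width_mul_le_area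
        (fun p hp => (hw sh (by simp) p hp).le) (height_le_of_pairwise hsort (hne sh' (by simp)))
    simp only [List.map_cons, List.sum_cons, List.flatten_cons, List.map_append,
      List.sum_append] at ih' ⊢
    rw [area] at h_area
    linarith

end Shelf

theorem canshelv_size_bound_general (S : List (List (ℝ × ℝ)))
    (hne : ∀ sh ∈ S, sh ≠ [])
    (hw : ∀ sh ∈ S, ∀ p ∈ sh, 0 < p.1 ∧ p.1 ≤ 1)
    (hh : ∀ sh ∈ S, ∀ p ∈ sh, 0 < p.2 ∧ p.2 ≤ 1)
    (hsort : (S.flatten.map Prod.snd).Pairwise (· ≥ ·))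
    (hfull : ∀ i, i + 1 < S.length → ((S.getD i []).map Prod.fst).sum = 1) :
    (S.map (fun sh => (sh.map Prod.snd).headI)).sum <
      1 + (S.flatten.map (fun p => p.1 * p.2)).sum := by
  cases S with
  | nil => simp
  | cons sh S =>
    have h_first : Shelf.height sh ≤ 1 := by
      obtain ⟨p, hp, hp_height⟩ := Shelf.height_mem (hne sh List.mem_cons_self)
      exact hp_height ▸ (hh sh List.mem_cons_self p hp).2
    have h_sum := Shelf.sum_height_lt hne (fun t ht p hp => (hw t ht p hp).1)
      (fun t ht p hp => (hh t ht p hp).1) hsort hfull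
    exact h_sum.trans_le (by linarith)

/-- Canonical shelving size bound.  `S` is a list of shelves; each shelf is a
(nonempty) list of item slices, a slice being a pair (width, height) with
width in `(0,1]` and height in `(0,1]`.  The slices, read shelf by shelf, are
in non-increasing order of height (greedy packing of items sorted by
non-increasing height); every shelf except the last is full (total width
exactly 1); each shelf is tight, i.e. its height is the height of its first
(tallest) slice.  Then the total height of the shelves is strictly less than
`1` plus the total area of the items. -/
theorem canshelv_size_bound (S : List (List (ℝ × ℝ))) (hS : S ≠ [])
    (hne : ∀ sh ∈ S, sh ≠ [])
    (hw : ∀ sh ∈ S, ∀ p ∈ sh, 0 < p.1 ∧ p.1 ≤ 1)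
    (hh : ∀ sh ∈ S, ∀ p ∈ sh, 0 < p.2 ∧ p.2 ≤ 1)
    (hsort : (S.flatten.map Prod.snd).Pairwise (· ≥ ·))
    (hfull : ∀ i, i + 1 < S.length → ((S.getD i []).map Prod.fst).sum = 1) :
    (S.map (fun sh => (sh.map Prod.snd).headI)).sum <
      1 + (S.flatten.map (fun p => p.1 * p.2)).sum :=
  canshelv_size_bound_general S hne hw hh hsort hfull
end

section
/- Greedy shelf feasibility: let I be a finite multiset of rectangles packed into a set J of shelves (each shelf has width 1 and holds items whose heights are at most the shelf height and whose total width is at most 1). If the shelves of J are processed in non-increasing height order and the items of I in non-increasing height order, then the greedy algorithm that packs the largest possible slice of each item into the first non-full shelf never encounters an item taller than the current shelf. Consequently, canShelv(I) ⪯ J. -/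
/-- Greedy shelf feasibility / `canShelv(I) ⪯ J`.
Items `0,…,n-1` have widths `w i ∈ (0,1]` and heights `h i ∈ (0,1]`, sorted in
non-increasing order of height.  They are packed (with vertical slicing) into
shelves `J` of heights `H : Fin p → ℝ`: `c i S` is the width of the slice of
item `i` placed in shelf `S`; each shelf has width capacity 1, and a slice of
positive width fits only in a shelf at least as tall as the item.
The canonical shelving has `⌈W⌉` tight shelves (`W` the total width); its
`j`-th shelf (0-indexed) has the height of the item `m` whose slice contains
the cumulative-width point `j`, i.e. `Σ_{i<m} w i ≤ j < Σ_{i≤m} w i`.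
Conclusion: there is an injection `π` from the canonical shelves to the
shelves of `J` that does not decrease heights. -/
theorem canshelv_pred (n p : ℕ) (w h : ℕ → ℝ) (H : Fin p → ℝ)
    (hw : ∀ i < n, 0 < w i ∧ w i ≤ 1)
    (hh : ∀ i < n, 0 < h i ∧ h i ≤ 1)
    (hmono : ∀ i j, i ≤ j → j < n → h j ≤ h i)
    (c : ℕ → Fin p → ℝ)
    (hc0 : ∀ i S, 0 ≤ c i S)
    (hctot : ∀ i < n, ∑ S, c i S = w i)
    (hcap : ∀ S, ∑ i ∈ Finset.range n, c i S ≤ 1)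
    (hfit : ∀ i < n, ∀ S, 0 < c i S → h i ≤ H S) :
    ∃ π : Fin ⌈∑ i ∈ Finset.range n, w i⌉₊ → Fin p, Function.Injective π ∧
      ∀ (j : Fin ⌈∑ i ∈ Finset.range n, w i⌉₊) (m : ℕ), m < n →
        ∑ i ∈ Finset.range m, w i ≤ (j : ℝ) →
        (j : ℝ) < ∑ i ∈ Finset.range (m + 1), w i →
        h m ≤ H (π j) := by
  classical
  set W : ℝ := ∑ i ∈ Finset.range n, w i with hW
  set N : ℕ := ⌈W⌉₊ with hN
  -- key counting lemma
  have count : ∀ (j m : ℕ), m < n → (j : ℝ) < ∑ i ∈ Finset.range (m + 1), w i →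
      j + 1 ≤ (Finset.univ.filter (fun S => h m ≤ H S)).card := by
    intro j m hm hjlt
    set T := Finset.univ.filter (fun S => h m ≤ H S) with hT
    have key : (j : ℝ) < (T.card : ℝ) := by
      calc (j : ℝ) < ∑ i ∈ Finset.range (m + 1), w i := hjlt
        _ = ∑ i ∈ Finset.range (m + 1), ∑ S ∈ T, c i S := by
            apply Finset.sum_congr rfl
            intro i hi
            have hi' : i < n := lt_of_lt_of_le (Finset.mem_range.mp hi) hm
            rw [← hctot i hi']
            rw [← Finset.sum_filter_add_sum_filter_not Finset.univ (fun S => h m ≤ H S)]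
            have : ∑ S ∈ Finset.univ.filter (fun S => ¬ h m ≤ H S), c i S = 0 := by
              apply Finset.sum_eq_zero
              intro S hS
              simp only [Finset.mem_filter] at hS
              by_contra hne
              have hpos : 0 < c i S := lt_of_le_of_ne (hc0 i S) (Ne.symm hne)
              exact hS.2 (le_trans (hmono i m (Nat.lt_succ_iff.mp (Finset.mem_range.mp hi)) hm)
                (hfit i hi' S hpos))
            rw [this, add_zero]
        _ = ∑ S ∈ T, ∑ i ∈ Finset.range (m + 1), c i S := Finset.sum_comm
        _ ≤ ∑ S ∈ T, (1 : ℝ) := by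
            apply Finset.sum_le_sum
            intro S _
            calc ∑ i ∈ Finset.range (m + 1), c i S
                ≤ ∑ i ∈ Finset.range n, c i S :=
                  Finset.sum_le_sum_of_subset_of_nonneg
                    (Finset.range_subset_range.mpr hm) (fun i _ _ => hc0 i S)
              _ ≤ 1 := hcap S
        _ = (T.card : ℝ) := by simp
    exact_mod_cast Nat.lt_iff_add_one_le.mp (by exact_mod_cast key)
  by_cases hN0 : N = 0
  · refine ⟨fun j => absurd j.2 (by omega), ?_, ?_⟩
    · intro a; exact absurd a.2 (by omega)
    · intro j; exact absurd j.2 (by omega)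
  -- N ≤ p
  have hn0 : n ≠ 0 := by
    rintro rfl
    simp [hW] at hN
    omega
  have hWlt : ((N - 1 : ℕ) : ℝ) < W := Nat.lt_ceil.mp (by omega)
  have hn1 : n - 1 + 1 = n := by omega
  have hPex : ∃ m, ((N - 1 : ℕ) : ℝ) < ∑ i ∈ Finset.range (m + 1), w i :=
    ⟨n - 1, by rw [hn1]; exact hWlt⟩
  have hp : N ≤ p := by
    set m₀ := Nat.find hPex with hm₀
    have hspec := Nat.find_spec hPex
    have hm₀n : m₀ < n := by
      have : m₀ ≤ n - 1 := Nat.find_le (by rw [hn1]; exact hWlt)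
      omega
    have := count (N - 1) m₀ hm₀n hspec
    calc N = (N - 1) + 1 := by omega
      _ ≤ (Finset.univ.filter (fun S => h m₀ ≤ H S)).card := this
      _ ≤ p := le_trans (Finset.card_le_card (Finset.filter_subset _ _)) (by simp)
  -- sort shelves by nonincreasing height
  set σ := Tuple.sort (fun S => -H S) with hσ
  have hanti : ∀ a b : Fin p, a ≤ b → H (σ b) ≤ H (σ a) := by
    intro a b hab
    have := Tuple.monotone_sort (fun S => -H S) hab
    simpa using this
  refine ⟨fun j => σ (Fin.castLE hp j), ?_, ?_⟩
  · intro a b hab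
    exact Fin.castLE_injective hp (σ.injective hab)
  · intro j m hm _ hjlt
    have hcnt := count j m hm hjlt
    set T := Finset.univ.filter (fun S => h m ≤ H S) with hT
    set B := T.image σ.symm with hB
    have hBcard : B.card = T.card := Finset.card_image_of_injective _ σ.symm.injective
    have hex : ∃ k ∈ B, (j : ℕ) ≤ (k : ℕ) := by
      by_contra hcon
      push_neg at hcon
      have : B.card ≤ (Finset.range (j : ℕ)).card := by
        exact Finset.card_le_card_of_injOn (fun k => (k : ℕ))
          (fun k hk => Finset.mem_range.mpr (hcon k hk))
          (fun a _ b _ hab => Fin.val_injective hab)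
      rw [hBcard, Finset.card_range] at this
      omega
    obtain ⟨k, hkB, hjk⟩ := hex
    have hkT : σ k ∈ T := by
      obtain ⟨S, hS, hSk⟩ := Finset.mem_image.mp hkB
      rwa [← hSk, Equiv.apply_symm_apply]
    have hHk : h m ≤ H (σ k) := (Finset.mem_filter.mp hkT).2
    exact le_trans hHk (hanti (Fin.castLE hp j) k hjk)
end

section
/- Monotonization preserves dual feasibility: let (y, z) with y ∈ ℝ^{t-1}_{≥0}, z ≥ 0 be feasible for the dual constraints Σ_j C_j y_j + (1 - h_C) z ≤ 1 for all configurations C (where h_C := Σ_j C_j h_{j+1} ≤ 1, C ∈ ℤ^{t-1}_{≥0}). For a fixed s ∈ [t-1], replacing y_s by max(y_s, y_{s+1} + (h_{s+1} - h_{s+2})z) (with y_t := 0, h_{t+1} := 0) yields another feasible solution. -/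
/-- Feasibility for the dual of the configuration LP: heights `h (j+1)` for
`j ∈ {1,…,t-1}`; a configuration is `C : ℕ → ℕ` with
`h_C = Σ_{j=1}^{t-1} C j · h (j+1) ≤ 1`, and feasibility of `(y, z)` means
`Σ_j C j · y j + (1 - h_C) · z ≤ 1` for every configuration `C`,
with all `y j ≥ 0` and `z ≥ 0`. -/
def DualFeasible (t : ℕ) (h : ℕ → ℝ) (y : ℕ → ℝ) (z : ℝ) : Prop :=
  (∀ j ∈ Finset.Icc 1 (t - 1), 0 ≤ y j) ∧ 0 ≤ z ∧
  ∀ C : ℕ → ℕ, (∑ j ∈ Finset.Icc 1 (t - 1), (C j : ℝ) * h (j + 1)) ≤ 1 →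
    (∑ j ∈ Finset.Icc 1 (t - 1), (C j : ℝ) * y j) +
      (1 - ∑ j ∈ Finset.Icc 1 (t - 1), (C j : ℝ) * h (j + 1)) * z ≤ 1

/-- Monotonization step preserves dual feasibility: replacing `y s` by
`max (y s) (y (s+1) + (h (s+1) - h (s+2))·z)` (with the conventions
`y t = 0`, `h (t+1) = 0`) keeps the solution feasible. -/
theorem monotonization_step (t : ℕ) (ht : 2 ≤ t) (h : ℕ → ℝ)
    (hdec : ∀ j, 1 ≤ j → j < t → h (j + 1) < h j) (hpos : 0 < h t)
    (h1 : h 1 ≤ 1) (hsent : h (t + 1) = 0)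
    (y : ℕ → ℝ) (z : ℝ) (hyt : y t = 0)
    (hfeas : DualFeasible t h y z)
    (s : ℕ) (hs1 : 1 ≤ s) (hs2 : s ≤ t - 1) :
    DualFeasible t h
      (Function.update y s (max (y s) (y (s + 1) + (h (s + 1) - h (s + 2)) * z))) z := by
  obtain ⟨hy, hz, hC⟩ := hfeas
  set S := Finset.Icc 1 (t - 1) with hS
  have hsS : s ∈ S := Finset.mem_Icc.mpr ⟨hs1, hs2⟩
  set m := max (y s) (y (s + 1) + (h (s + 1) - h (s + 2)) * z) with hm
  refine ⟨?_, hz, ?_⟩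
  · intro j hj
    rcases eq_or_ne j s with rfl | hne
    · rw [Function.update_self]
      exact le_max_of_le_left (hy j hj)
    · rw [Function.update_of_ne hne]; exact hy j hj
  intro C hCh
  set C' : ℕ → ℕ := fun j => if j = s then 0 else if j = s + 1 then C (s + 1) + C s else C j
    with hC'
  have key : ∀ f : ℕ → ℝ, f t = 0 →
      ∑ j ∈ S, (C' j : ℝ) * f j
        = ∑ j ∈ S, (C j : ℝ) * f j - C s * f s + C s * f (s + 1) := by
    intro f hft
    rcases lt_or_eq_of_le hs2 with hlt | heq
    · have hs1S : s + 1 ∈ S.erase s := by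
        rw [Finset.mem_erase]
        refine ⟨by omega, Finset.mem_Icc.mpr ⟨by omega, by omega⟩⟩
      have e3 : ∑ j ∈ (S.erase s).erase (s+1), (C' j : ℝ) * f j
          = ∑ j ∈ (S.erase s).erase (s+1), (C j : ℝ) * f j := by
        refine Finset.sum_congr rfl fun j hj => ?_
        rw [Finset.mem_erase, Finset.mem_erase] at hj
        simp [hC', hj.1, hj.2.1]
      rw [← Finset.add_sum_erase _ _ hsS, ← Finset.add_sum_erase _ _ hs1S, e3,
        ← Finset.add_sum_erase S (fun j => (C j : ℝ) * f j) hsS,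
        ← Finset.add_sum_erase _ (fun j => (C j : ℝ) * f j) hs1S]
      have v1 : (C' s : ℝ) = 0 := by simp [hC']
      have v2 : (C' (s+1) : ℝ) = (C (s+1) : ℝ) + C s := by
        simp [hC', (by omega : s + 1 ≠ s)]
      rw [v1, v2]; ring
    · have hst : s + 1 = t := by omega
      have e3 : ∑ j ∈ S.erase s, (C' j : ℝ) * f j
          = ∑ j ∈ S.erase s, (C j : ℝ) * f j := by
        refine Finset.sum_congr rfl fun j hj => ?_
        rw [Finset.mem_erase] at hj
        have hjle : j ≤ t - 1 := (Finset.mem_Icc.mp hj.2).2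
        simp only [hC', if_neg hj.1, if_neg (show j ≠ s + 1 by omega)]
      rw [← Finset.add_sum_erase _ _ hsS, e3,
        ← Finset.add_sum_erase S (fun j => (C j : ℝ) * f j) hsS]
      have v1 : (C' s : ℝ) = 0 := by simp [hC']
      rw [v1, hst, hft]; ring
  have keyy : ∑ j ∈ S, (C' j : ℝ) * y j
      = ∑ j ∈ S, (C j : ℝ) * y j - C s * y s + C s * y (s + 1) := key y hyt
  have keyh : ∑ j ∈ S, (C' j : ℝ) * h (j + 1)
      = ∑ j ∈ S, (C j : ℝ) * h (j + 1) - C s * h (s + 1) + C s * h (s + 2) :=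
    key (fun j => h (j + 1)) hsent
  have hmono : h (s + 2) ≤ h (s + 1) := by
    rcases lt_or_eq_of_le hs2 with hlt | heq
    · exact (hdec (s + 1) (by omega) (by omega)).le
    · have hst : s + 1 = t := by omega
      have h2 : h (s + 2) = 0 := by rw [show s + 2 = t + 1 by omega]; exact hsent
      rw [h2, hst]; exact hpos.le
  have hC'h : ∑ j ∈ S, (C' j : ℝ) * h (j + 1) ≤ 1 := by
    rw [keyh]
    have hmul : (C s : ℝ) * h (s + 2) ≤ (C s : ℝ) * h (s + 1) :=
      mul_le_mul_of_nonneg_left hmono (Nat.cast_nonneg _)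
    linarith
  have H2 := hC C' hC'h
  rw [keyy, keyh] at H2
  have egoal : ∑ j ∈ S, (C j : ℝ) * Function.update y s m j
      = ∑ j ∈ S, (C j : ℝ) * y j - C s * y s + C s * m := by
    have e : ∑ j ∈ S.erase s, (C j : ℝ) * Function.update y s m j
        = ∑ j ∈ S.erase s, (C j : ℝ) * y j := by
      refine Finset.sum_congr rfl fun j hj => ?_
      rw [Function.update_of_ne (Finset.mem_erase.mp hj).1]
    rw [← Finset.add_sum_erase _ _ hsS, e, Function.update_self,
      ← Finset.add_sum_erase S (fun j => (C j : ℝ) * y j) hsS]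
    ring
  rw [egoal]
  rcases max_choice (y s) (y (s + 1) + (h (s + 1) - h (s + 2)) * z) with hmc | hmc
  · rw [hm, hmc]
    have := hC C hCh
    linarith
  · rw [hm, hmc]
    have hcs : (0:ℝ) ≤ C s := Nat.cast_nonneg _
    nlinarith [H2]
end

section
/- The function η built from a monotone feasible dual solution is a weighting function: given heights 1 ≥ h₂ > h₃ > ... > h_t > 0 (with sentinel values), a monotone non-increasing feasible dual solution (ŷ, z*) to the configuration LP, the function η(x) := ŷ₁ for x ∈ [h₂,1], η(x) := ŷ_j for x ∈ [h_{j+1}, h_j) (2 ≤ j ≤ t-1), and η(x) := x·z* for x < h_t, satisfies: for any finite set X ⊆ (0,1] with ΣX ≤ 1, Σ_{x∈X} η(x) ≤ 1. -/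
/-- The function `η` built from a monotone feasible dual solution `(ŷ, z*)` of
the configuration LP is a weighting function: `η x = ŷ 1` on `[h 2, 1]`,
`η x = ŷ j` on `[h (j+1), h j)` for `2 ≤ j ≤ t-1`, and `η x = x·z*` for
`x < h t`; then any finite set `X ⊆ (0,1]` with `Σ X ≤ 1` satisfies
`Σ_{x ∈ X} η x ≤ 1`. -/
theorem eta_weighting (t : ℕ) (ht : 2 ≤ t) (h : ℕ → ℝ)
    (hdec : ∀ j, 1 ≤ j → j < t → h (j + 1) < h j) (hpos : 0 < h t)
    (h1 : h 1 ≤ 1) (hsent : h (t + 1) = 0)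
    (y : ℕ → ℝ) (z : ℝ) (hz : 0 ≤ z)
    (hmono : ∀ j, 1 ≤ j → j < t - 1 → y (j + 1) ≤ y j)
    (hlast : z * h t ≤ y (t - 1))
    (hfeas : ∀ C : ℕ → ℕ,
      (∑ j ∈ Finset.Icc 1 (t - 1), (C j : ℝ) * h (j + 1)) ≤ 1 →
      (∑ j ∈ Finset.Icc 1 (t - 1), (C j : ℝ) * y j) +
        (1 - ∑ j ∈ Finset.Icc 1 (t - 1), (C j : ℝ) * h (j + 1)) * z ≤ 1)
    (η : ℝ → ℝ)
    (hη1 : ∀ x, h 2 ≤ x → x ≤ 1 → η x = y 1)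
    (hη2 : ∀ j, 2 ≤ j → j ≤ t - 1 → ∀ x, h (j + 1) ≤ x → x < h j → η x = y j)
    (hη3 : ∀ x, 0 < x → x < h t → η x = x * z)
    (X : Finset ℝ) (hX : ∀ x ∈ X, 0 < x ∧ x ≤ 1) (hsum : ∑ x ∈ X, x ≤ 1) :
    ∑ x ∈ X, η x ≤ 1 := by   classical
  have ht1 : 1 ≤ t - 1 := by omega
  have htt : t - 1 + 1 = t := by omega
  have hex : ∀ x : ℝ, h t ≤ x → ∃ j, 1 ≤ j ∧ h (j + 1) ≤ x := by
    intro x hx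
    exact ⟨t - 1, ht1, by rw [htt]; exact hx⟩
  set g : ℝ → ℕ := fun x => if hx : h t ≤ x then Nat.find (hex x hx) else 0 with hg
  have hg0 : ∀ x, ¬ h t ≤ x → g x = 0 := by intro x hx; simp [hg, hx]
  have hgprop : ∀ x, ∀ hx : h t ≤ x, 1 ≤ g x ∧ h (g x + 1) ≤ x ∧ g x ≤ t - 1 := by
    intro x hx
    have h1' := Nat.find_spec (hex x hx)
    have h2' : Nat.find (hex x hx) ≤ t - 1 :=
      Nat.find_le ⟨ht1, by rw [htt]; exact hx⟩
    simp only [hg, dif_pos hx]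
    exact ⟨h1'.1, h1'.2, h2'⟩
  have hglt : ∀ x, ∀ hx : h t ≤ x, 2 ≤ g x → x < h (g x) := by
    intro x hx h2x
    have hgn : g x = Nat.find (hex x hx) := by simp only [hg, dif_pos hx]
    rw [hgn] at h2x ⊢
    by_contra hcon
    push_neg at hcon
    exact Nat.find_min (hex x hx) (m := Nat.find (hex x hx) - 1) (by omega)
      ⟨by omega, by rwa [Nat.sub_add_cancel (by omega)]⟩
  have hηval : ∀ x ∈ X, h t ≤ x → η x = y (g x) := by
    intro x hxX hx
    obtain ⟨hg1, hgle, hgt⟩ := hgprop x hx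
    rcases eq_or_lt_of_le hg1 with heq | hlt2
    · rw [← heq] at hgle ⊢
      exact hη1 x hgle (hX x hxX).2
    · have h2gx : 2 ≤ g x := hlt2
      exact hη2 (g x) h2gx hgt x hgle (hglt x hx h2gx)
  have hmaps : ∀ x ∈ X, g x ∈ Finset.Icc 0 (t - 1) := by
    intro x hx
    simp only [Finset.mem_Icc]
    refine ⟨Nat.zero_le _, ?_⟩
    by_cases hx' : h t ≤ x
    · exact (hgprop x hx').2.2
    · rw [hg0 x hx']; omega
  set C : ℕ → ℕ := fun j => (X.filter (fun x => g x = j)).card with hC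
  have hsplitη := Finset.sum_fiberwise_of_maps_to hmaps η
  have hsplitx := Finset.sum_fiberwise_of_maps_to hmaps (fun x => x)
  have hicc : Finset.Icc 0 (t - 1) = insert 0 (Finset.Icc 1 (t - 1)) := by
    ext j; simp [Finset.mem_Icc, Finset.mem_insert]; omega
  have h0nm : (0 : ℕ) ∉ Finset.Icc 1 (t - 1) := by simp
  -- fiber facts for j ≥ 1
  have hfibη : ∀ j ∈ Finset.Icc 1 (t - 1),
      ∑ x ∈ X.filter (fun x => g x = j), η x = (C j : ℝ) * y j := by
    intro j hj
    rw [Finset.sum_congr rfl (fun x hx => ?_), Finset.sum_const, nsmul_eq_mul]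
    simp only [Finset.mem_filter] at hx
    obtain ⟨hxX, hgx⟩ := hx
    have hx' : h t ≤ x := by
      by_contra hc
      rw [hg0 x hc] at hgx
      simp only [Finset.mem_Icc] at hj
      omega
    rw [hηval x hxX hx', hgx]
  have hfibx : ∀ j ∈ Finset.Icc 1 (t - 1),
      (C j : ℝ) * h (j + 1) ≤ ∑ x ∈ X.filter (fun x => g x = j), x := by
    intro j hj
    have := Finset.card_nsmul_le_sum (X.filter (fun x => g x = j)) (fun x => x)
      (h (j + 1)) (fun x hx => ?_)
    · rw [nsmul_eq_mul] at this; exact this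
    · simp only [Finset.mem_filter] at hx
      obtain ⟨hxX, hgx⟩ := hx
      have hx' : h t ≤ x := by
        by_contra hc
        rw [hg0 x hc] at hgx
        simp only [Finset.mem_Icc] at hj
        omega
      have := (hgprop x hx').2.1
      rwa [hgx] at this
  -- fiber 0
  have hfib0η : ∑ x ∈ X.filter (fun x => g x = 0),
      η x = (∑ x ∈ X.filter (fun x => g x = 0), x) * z := by
    rw [Finset.sum_mul]
    refine Finset.sum_congr rfl (fun x hx => ?_)
    simp only [Finset.mem_filter] at hx
    obtain ⟨hxX, hgx⟩ := hx
    have hx' : ¬ h t ≤ x := by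
      intro hc
      have := (hgprop x hc).1
      omega
    push_neg at hx'
    exact hη3 x (hX x hxX).1 hx'
  have hfib0pos : 0 ≤ ∑ x ∈ X.filter (fun x => g x = 0), x :=
    Finset.sum_nonneg fun x hx => (hX x (Finset.mem_filter.mp hx).1).1.le
  set S0 : ℝ := ∑ x ∈ X.filter (fun x => g x = 0), x with hS0
  set hc : ℝ := ∑ j ∈ Finset.Icc 1 (t - 1), (C j : ℝ) * h (j + 1) with hhc
  have hkey : S0 + hc ≤ 1 := by
    calc S0 + hc ≤ ∑ x ∈ X, x := by
          rw [← hsplitx, hicc, Finset.sum_insert h0nm]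
          exact add_le_add le_rfl (Finset.sum_le_sum hfibx)
      _ ≤ 1 := hsum
  have hc1 : hc ≤ 1 := by linarith
  have := hfeas C hc1
  calc ∑ x ∈ X, η x
      = S0 * z + ∑ j ∈ Finset.Icc 1 (t - 1), (C j : ℝ) * y j := by
        rw [← hsplitη, hicc, Finset.sum_insert h0nm, hfib0η]
        rw [Finset.sum_congr rfl hfibη]
    _ ≤ (1 - hc) * z + ∑ j ∈ Finset.Icc 1 (t - 1), (C j : ℝ) * y j := by
        gcongr
        linarith
    _ ≤ 1 := by linarith [hfeas C hc1]
end

section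
/- If a set I of d-dimensional items (each with side lengths in (0,1]) can be packed into the unit d-cube without rotation, and g₁,...,g_d are weighting functions, then the set of items {g(i) : i ∈ I}, where g(i) has length g_j(ℓ_j(i)) in dimension j, can also be packed into the unit d-cube without rotation. -/
/-- A weighting function (dual feasible function). -/
def IsWeighting (g : ℝ → ℝ) : Prop :=
  (∀ x : ℝ, 0 ≤ x → x ≤ 1 → 0 ≤ g x ∧ g x ≤ 1) ∧
  ∀ l : List ℝ, (∀ x ∈ l, 0 ≤ x ∧ x ≤ 1) → l.sum ≤ 1 → (l.map g).sum ≤ 1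

/-- `Packs d n ℓ` : the `n` axis-parallel `d`-dimensional boxes with side
lengths `ℓ i j` can be placed inside the unit `d`-cube with no two boxes
overlapping in a set of positive volume (two boxes don't overlap iff they are
separated in some dimension). -/
def Packs (d n : ℕ) (ℓ : Fin n → Fin d → ℝ) : Prop :=
  ∃ v : Fin n → Fin d → ℝ,
    (∀ i j, 0 ≤ v i j ∧ v i j + ℓ i j ≤ 1) ∧
    ∀ i i', i ≠ i' → ∃ j, v i j + ℓ i j ≤ v i' j ∨ v i' j + ℓ i' j ≤ v i j

/-!
Move every box coordinate `t` to `supWeight g t`, the largest total weight `∑ g x` of a list of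
sizes `x ∈ [0, 1]` of total size at most `t`. Appending an item of size `x` to such a list gives
`supWeight g t + g x ≤ supWeight g t'` whenever `t + x ≤ t' ≤ 1`. Every inequality `v + ℓ ≤ v'` of
a packing (containment in the cube, or separation of two boxes in one dimension) is of this form,
so it survives with `v ↦ supWeight g v` and `ℓ ↦ g ℓ`, each dimension on its own.
-/

def weightsBelow (g : ℝ → ℝ) (t : ℝ) : Set ℝ :=
  {s | ∃ l : List ℝ, (∀ x ∈ l, 0 ≤ x ∧ x ≤ 1) ∧ l.sum ≤ t ∧ (l.map g).sum = s}

noncomputable def supWeight (g : ℝ → ℝ) (t : ℝ) : ℝ :=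
  sSup (weightsBelow g t)

section weightsBelow

variable {g : ℝ → ℝ} {s t t' x : ℝ}

theorem zero_mem_weightsBelow (ht : 0 ≤ t) : 0 ∈ weightsBelow g t :=
  ⟨[], by simp, by simpa using ht, by simp⟩

theorem add_mem_weightsBelow (hx : 0 ≤ x ∧ x ≤ 1) (htt' : t + x ≤ t')
    (hs : s ∈ weightsBelow g t) : s + g x ∈ weightsBelow g t' := by
  obtain ⟨l, hl, hlt, rfl⟩ := hs
  refine ⟨x :: l, ?_, ?_, ?_⟩
  · exact List.forall_mem_cons.2 ⟨hx, hl⟩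
  · simp only [List.sum_cons]
    linarith
  · simp only [List.map_cons, List.sum_cons]
    ring

theorem IsWeighting.le_one_of_mem_weightsBelow (hg : IsWeighting g) (ht : t ≤ 1)
    (hs : s ∈ weightsBelow g t) : s ≤ 1 := by
  obtain ⟨l, hl, hlt, rfl⟩ := hs
  exact hg.2 l hl (hlt.trans ht)

theorem IsWeighting.bddAbove_weightsBelow (hg : IsWeighting g) (ht : t ≤ 1) :
    BddAbove (weightsBelow g t) :=
  ⟨1, fun _ => hg.le_one_of_mem_weightsBelow ht⟩

theorem IsWeighting.supWeight_nonneg (hg : IsWeighting g) (ht₀ : 0 ≤ t) (ht₁ : t ≤ 1) :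
    0 ≤ supWeight g t :=
  le_csSup (hg.bddAbove_weightsBelow ht₁) (zero_mem_weightsBelow ht₀)

theorem IsWeighting.supWeight_le_one (hg : IsWeighting g) (ht₀ : 0 ≤ t) (ht₁ : t ≤ 1) :
    supWeight g t ≤ 1 :=
  csSup_le ⟨0, zero_mem_weightsBelow ht₀⟩ fun _ => hg.le_one_of_mem_weightsBelow ht₁

theorem IsWeighting.supWeight_add_le (hg : IsWeighting g) (ht : 0 ≤ t) (hx : 0 ≤ x ∧ x ≤ 1)
    (htt' : t + x ≤ t') (ht' : t' ≤ 1) : supWeight g t + g x ≤ supWeight g t' := by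
  have : supWeight g t ≤ supWeight g t' - g x :=
    csSup_le ⟨0, zero_mem_weightsBelow ht⟩ fun s hs => by
      have : s + g x ≤ supWeight g t' :=
        le_csSup (hg.bddAbove_weightsBelow ht') (add_mem_weightsBelow hx htt' hs)
      linarith
  linarith

end weightsBelow

/-- Fekete–Schepers transformation: applying weighting functions `g j`
coordinatewise to a packable set of items yields a packable set of items. -/
theorem dff_pack (d n : ℕ) (ℓ : Fin n → Fin d → ℝ)
    (hℓ : ∀ i j, 0 < ℓ i j ∧ ℓ i j ≤ 1)
    (g : Fin d → ℝ → ℝ) (hg : ∀ j, IsWeighting (g j))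
    (hpack : Packs d n ℓ) :
    Packs d n (fun i j => g j (ℓ i j)) := by
  obtain ⟨v, hv, hsep⟩ := hpack
  have hℓ' : ∀ i j, 0 ≤ ℓ i j ∧ ℓ i j ≤ 1 := fun i j => ⟨(hℓ i j).1.le, (hℓ i j).2⟩
  have hv₁ : ∀ i j, v i j ≤ 1 := fun i j => by linarith [hv i j, hℓ i j]
  have shift : ∀ i j t, v i j + ℓ i j ≤ t → t ≤ 1 →
      supWeight (g j) (v i j) + g j (ℓ i j) ≤ supWeight (g j) t :=
    fun i j _ h ht => (hg j).supWeight_add_le (hv i j).1 (hℓ' i j) h ht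
  refine ⟨fun i j => supWeight (g j) (v i j), fun i j => ⟨?_, ?_⟩, fun i i' hii' => ?_⟩
  · exact (hg j).supWeight_nonneg (hv i j).1 (hv₁ i j)
  · exact (shift i j 1 (hv i j).2 le_rfl).trans ((hg j).supWeight_le_one zero_le_one le_rfl)
  · obtain ⟨j, h | h⟩ := hsep i i' hii'
    · exact ⟨j, .inl (shift i j _ h (hv₁ i' j))⟩
    · exact ⟨j, .inr (shift i' j _ h (hv₁ i j))⟩
end

section
/- Volume lower bound via weighting functions: if I is a finite set of d-dimensional items that can be packed into m unit d-cube bins, and g₁,...,g_d are weighting functions, then Σ_{i ∈ I} ∏_{j=1}^d g_j(ℓ_j(i)) ≤ m. In particular, with each g_j the harmonic weighting function H_k = f_k/T_k, we get Σ_{i ∈ I} ∏_j f_k(ℓ_j(i)) ≤ T_k^d · opt(I), where opt(I) is the minimum number of bins. -/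
set_option linter.unusedSectionVars false

namespace DffVolumeBound

variable {ι : Type*} [DecidableEq ι]

noncomputable def greedy (a ℓ : ι → ℝ) (s : Finset ι) (t : ℝ) : Finset ι :=
  if h : (s.filter (fun i => t ≤ a i)).Nonempty then
    let i := Classical.choose (Finset.exists_min_image _ a h)
    insert i (greedy a ℓ (s.erase i) (a i + ℓ i))
  else ∅
termination_by s.card
decreasing_by
  exact Finset.card_erase_lt_of_mem
    (Finset.mem_filter.mp (Classical.choose_spec (Finset.exists_min_image _ a h)).1).1

lemma greedy_spec (a ℓ : ι → ℝ) (s : Finset ι) (t : ℝ) :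
    ((¬ (s.filter (fun i => t ≤ a i)).Nonempty) ∧ greedy a ℓ s t = ∅) ∨
    ∃ i ∈ s.filter (fun i => t ≤ a i), (∀ j ∈ s.filter (fun i => t ≤ a i), a i ≤ a j) ∧
      greedy a ℓ s t = insert i (greedy a ℓ (s.erase i) (a i + ℓ i)) := by
  rw [greedy]
  split_ifs with h
  · right
    obtain ⟨hi, hmin⟩ := Classical.choose_spec (Finset.exists_min_image _ a h)
    exact ⟨_, hi, hmin, rfl⟩
  · exact Or.inl ⟨h, rfl⟩

lemma greedy_mem (a ℓ : ι → ℝ) (hℓ : ∀ i, 0 < ℓ i) :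
    ∀ (s : Finset ι) (t : ℝ), ∀ j ∈ greedy a ℓ s t, j ∈ s ∧ t ≤ a j := by
  intro s
  induction s using Finset.strongInduction with
  | _ s ih =>
    intro t j hj
    rcases greedy_spec a ℓ s t with ⟨_, he⟩ | ⟨i, hi, _, he⟩
    · rw [he] at hj; simp at hj
    · rw [he] at hj
      obtain ⟨his, hti⟩ := Finset.mem_filter.mp hi
      rcases Finset.mem_insert.mp hj with rfl | hj'
      · exact ⟨his, hti⟩
      · have h2 := ih (s.erase i) (Finset.erase_ssubset his) _ j hj'
        exact ⟨Finset.mem_of_mem_erase h2.1,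
          le_trans (le_trans hti (le_add_of_nonneg_right (hℓ i).le)) h2.2⟩

lemma greedy_sum (a ℓ : ι → ℝ) (hℓ : ∀ i, 0 < ℓ i) (hub : ∀ i, a i + ℓ i ≤ 1) :
    ∀ (s : Finset ι) (t : ℝ), (greedy a ℓ s t).Nonempty →
      t + ∑ j ∈ greedy a ℓ s t, ℓ j ≤ 1 := by
  intro s
  induction s using Finset.strongInduction with
  | _ s ih =>
    intro t hne
    rcases greedy_spec a ℓ s t with ⟨_, he⟩ | ⟨i, hi, _, he⟩
    · rw [he] at hne; simp at hne
    · obtain ⟨his, hti⟩ := Finset.mem_filter.mp hi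
      have hinotin : i ∉ greedy a ℓ (s.erase i) (a i + ℓ i) := fun h =>
        (Finset.notMem_erase i s) (greedy_mem a ℓ hℓ _ _ i h).1
      rw [he, Finset.sum_insert hinotin]
      by_cases h2 : (greedy a ℓ (s.erase i) (a i + ℓ i)).Nonempty
      · have := ih (s.erase i) (Finset.erase_ssubset his) _ h2
        linarith
      · rw [Finset.not_nonempty_iff_eq_empty.mp h2]
        simp only [Finset.sum_empty, add_zero]
        linarith [hub i]

lemma greedy_cover (a ℓ : ι → ℝ) (hℓ : ∀ i, 0 < ℓ i) :
    ∀ (s : Finset ι) (t x : ℝ), t ≤ x →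
    (∀ j ∈ greedy a ℓ s t, ¬ (a j ≤ x ∧ x < a j + ℓ j)) →
    (∀ i ∈ s.filter (fun i => a i ≤ x ∧ x < a i + ℓ i), a i < t) ∨
    ∃ y j, j ∈ s ∧ ¬ (a j ≤ x ∧ x < a j + ℓ j) ∧ (a j ≤ y ∧ y < a j + ℓ j) ∧
      ∀ i ∈ s.filter (fun i => a i ≤ x ∧ x < a i + ℓ i), a i ≤ y ∧ y < a i + ℓ i := by
  intro s
  induction s using Finset.strongInduction with
  | _ s ih =>
    intro t x htx hnc
    rcases greedy_spec a ℓ s t with ⟨hno, he⟩ | ⟨i, hi, hmin, he⟩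
    · left
      intro k hk
      obtain ⟨hks, hkc⟩ := Finset.mem_filter.mp hk
      by_contra h
      exact hno ⟨k, Finset.mem_filter.mpr ⟨hks, not_lt.mp h⟩⟩
    · obtain ⟨his, hti⟩ := Finset.mem_filter.mp hi
      have hnci : ¬ (a i ≤ x ∧ x < a i + ℓ i) := hnc i (he ▸ Finset.mem_insert_self _ _)
      rcases lt_or_ge x (a i) with hxi | hxi
      · -- x < a i : all covering items have start < t
        left
        intro k hk
        obtain ⟨hks, hkc⟩ := Finset.mem_filter.mp hk
        by_contra h
        have := hmin k (Finset.mem_filter.mpr ⟨hks, not_lt.mp h⟩)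
        linarith [hkc.1]
      · have hxe : a i + ℓ i ≤ x := by
          rcases lt_or_ge x (a i + ℓ i) with h | h
          · exact absurd ⟨hxi, h⟩ hnci
          · exact h
        -- recurse
        have hCeq : (s.erase i).filter (fun k => a k ≤ x ∧ x < a k + ℓ k)
            = s.filter (fun k => a k ≤ x ∧ x < a k + ℓ k) := by
          rw [Finset.filter_erase, Finset.erase_eq_of_notMem]
          simp only [Finset.mem_filter]
          tauto
        have hnc' : ∀ j ∈ greedy a ℓ (s.erase i) (a i + ℓ i), ¬ (a j ≤ x ∧ x < a j + ℓ j) :=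
          fun j hj => hnc j (he ▸ Finset.mem_insert_of_mem hj)
        rcases ih (s.erase i) (Finset.erase_ssubset his) (a i + ℓ i) x hxe hnc' with hleft | hright
        · rw [hCeq] at hleft
          set C := s.filter (fun k => a k ≤ x ∧ x < a k + ℓ k) with hC
          rcases C.eq_empty_or_nonempty with hCe | hCne
          · left; intro k hk; rw [hCe] at hk; simp at hk
          · right
            refine ⟨(C.sup' hCne a) ⊔ a i, i, his, hnci, ⟨le_sup_right, ?_⟩, ?_⟩
            · apply max_lt
              · exact (Finset.sup'_lt_iff hCne).mpr hleft
              · linarith [hℓ i]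
            · intro k hk
              have hky : a k ≤ C.sup' hCne a := Finset.le_sup' a hk
              obtain ⟨hks, hkc⟩ := Finset.mem_filter.mp hk
              refine ⟨le_trans hky le_sup_left, ?_⟩
              have h1 : (C.sup' hCne a) ⊔ a i < a i + ℓ i :=
                max_lt ((Finset.sup'_lt_iff hCne).mpr hleft) (by linarith [hℓ i])
              linarith [hkc.2]
        · rw [hCeq] at hright
          obtain ⟨y, j, hjs, h1, h2, h3⟩ := hright
          exact Or.inr ⟨y, j, Finset.mem_of_mem_erase hjs, h1, h2, h3⟩

lemma sum_map_toList (s : Finset ι) (f : ι → ℝ) : (s.toList.map f).sum = ∑ i ∈ s, f i := by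
  have h1 : ((s.toList.map f : List ℝ) : Multiset ℝ).sum = (s.toList.map f).sum :=
    Multiset.sum_coe _
  rw [← h1, ← Multiset.map_coe, Finset.toList, Multiset.coe_toList, Finset.sum]

/-- A set of pairwise-overlap-free-selected (greedy) intervals has weight sum ≤ 1. -/
lemma greedy_g_sum (g : ℝ → ℝ) (hg : IsWeighting g) (a ℓ : ι → ℝ)
    (hℓ : ∀ i, 0 < ℓ i) (ha : ∀ i, 0 ≤ a i) (hub : ∀ i, a i + ℓ i ≤ 1)
    (s : Finset ι) : ∑ i ∈ greedy a ℓ s 0, g (ℓ i) ≤ 1 := by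
  set S := greedy a ℓ s 0 with hS
  have hsum : ∑ i ∈ S, ℓ i ≤ 1 := by
    rcases S.eq_empty_or_nonempty with h | h
    · rw [h]; simp
    · have := greedy_sum a ℓ hℓ hub s 0 h
      linarith
  have h2 := hg.2 (S.toList.map ℓ) ?_ ?_
  · rwa [List.map_map, sum_map_toList S (g ∘ ℓ)] at h2
  · intro x hx
    obtain ⟨i, _, rfl⟩ := List.mem_map.mp hx
    exact ⟨(hℓ i).le, by linarith [hub i, ha i]⟩
  · rwa [sum_map_toList S ℓ]

/-- The key 1-D lemma, ℕ-weighted version. -/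
lemma nat_weighted_bound (g : ℝ → ℝ) (hg : IsWeighting g) (a ℓ : ι → ℝ)
    (hℓ : ∀ i, 0 < ℓ i) (ha : ∀ i, 0 ≤ a i) (hub : ∀ i, a i + ℓ i ≤ 1) :
    ∀ (q : ℕ) (p : ι → ℕ) (s : Finset ι),
      (∀ x : ℝ, ∑ i ∈ s.filter (fun i => a i ≤ x ∧ x < a i + ℓ i), p i ≤ q) →
      ∑ i ∈ s, (p i : ℝ) * g (ℓ i) ≤ q := by
  intro q
  induction q with
  | zero =>
    intro p s hload
    have hz : ∀ i ∈ s, (p i : ℝ) * g (ℓ i) = 0 := by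
      intro i hi
      have h1 : i ∈ s.filter (fun j => a j ≤ a i ∧ a i < a j + ℓ j) :=
        Finset.mem_filter.mpr ⟨hi, le_refl _, lt_add_of_pos_right _ (hℓ i)⟩
      have h2 : p i ≤ 0 := le_trans (Finset.single_le_sum (fun j _ => Nat.zero_le (p j)) h1)
        (hload (a i))
      simp [Nat.le_zero.mp h2]
    rw [Finset.sum_congr rfl hz]
    simp
  | succ q ih =>
    intro p s hload
    set s' := s.filter (fun i => 0 < p i) with hs'
    set S := greedy a ℓ s' 0 with hS
    have hSs' : ∀ j ∈ S, j ∈ s' := fun j hj => (greedy_mem a ℓ hℓ s' 0 j hj).1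
    have hSpos : ∀ j ∈ S, 1 ≤ p j := fun j hj => (Finset.mem_filter.mp (hSs' j hj)).2
    have hSs : ∀ j ∈ S, j ∈ s := fun j hj => (Finset.mem_filter.mp (hSs' j hj)).1
    set p' := fun i => if i ∈ S then p i - 1 else p i with hp'
    -- new load bound
    have hload' : ∀ x : ℝ, ∑ i ∈ s.filter (fun i => a i ≤ x ∧ x < a i + ℓ i), p' i ≤ q := by
      intro x
      set C := s.filter (fun i => a i ≤ x ∧ x < a i + ℓ i) with hC
      rcases (C ∩ S).eq_empty_or_nonempty with hCS | ⟨k, hk⟩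
      · -- no greedy interval covers x; show original load ≤ q here
        have hple : ∑ i ∈ C, p i ≤ q := by
          by_contra hgt
          have hCq : q + 1 ≤ ∑ i ∈ C, p i := Nat.succ_le_of_lt (Nat.lt_of_not_le hgt)
          set C' := s'.filter (fun i => a i ≤ x ∧ x < a i + ℓ i) with hC'
          have hC'C : C' = C.filter (fun i => 0 < p i) := by
            rw [hC', hC, hs', Finset.filter_filter, Finset.filter_filter]
            congr 1
            ext i
            tauto
          have hsumC' : ∑ i ∈ C', p i = ∑ i ∈ C, p i := by
            rw [hC'C]
            exact Finset.sum_filter_of_ne (fun i _ h => Nat.pos_of_ne_zero h)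
          have hC'ne : C'.Nonempty := by
            by_contra h
            rw [Finset.not_nonempty_iff_eq_empty] at h
            rw [h, Finset.sum_empty] at hsumC'
            omega
          obtain ⟨k0, hk0⟩ := hC'ne
          have hx0 : (0:ℝ) ≤ x := le_trans (ha k0) (Finset.mem_filter.mp hk0).2.1
          have hnc : ∀ j ∈ S, ¬ (a j ≤ x ∧ x < a j + ℓ j) := by
            intro j hj hc
            have : j ∈ C ∩ S := Finset.mem_inter.mpr ⟨Finset.mem_filter.mpr ⟨hSs j hj, hc⟩, hj⟩
            rw [hCS] at this
            simp at this
          rcases greedy_cover a ℓ hℓ s' 0 x hx0 hnc with hleft | ⟨y, j, hjs', hjnc, hjc, hcov⟩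
          · exact absurd (hleft k0 hk0) (not_lt.mpr (ha k0))
          · have hjC' : j ∉ C' := fun h => hjnc (Finset.mem_filter.mp h).2
            have hsub : insert j C' ⊆ s.filter (fun i => a i ≤ y ∧ y < a i + ℓ i) := by
              intro i hi
              rcases Finset.mem_insert.mp hi with rfl | hi'
              · exact Finset.mem_filter.mpr ⟨(Finset.mem_filter.mp hjs').1, hjc⟩
              · exact Finset.mem_filter.mpr ⟨(Finset.mem_filter.mp
                  (Finset.mem_filter.mp hi').1).1, hcov i hi'⟩
            have hjp : 1 ≤ p j := (Finset.mem_filter.mp hjs').2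
            have h1 : q + 2 ≤ ∑ i ∈ insert j C', p i := by
              rw [Finset.sum_insert hjC', hsumC']
              omega
            have h2 : ∑ i ∈ insert j C', p i ≤ q + 1 :=
              le_trans (Finset.sum_le_sum_of_subset hsub) (hload y)
            omega
        calc ∑ i ∈ C, p' i ≤ ∑ i ∈ C, p i :=
              Finset.sum_le_sum (fun i _ => by simp only [hp']; split <;> omega)
          _ ≤ q := hple
      · -- some greedy interval covers x: load drops by ≥ 1
        have hlt : ∑ i ∈ C, p' i < ∑ i ∈ C, p i := by
          apply Finset.sum_lt_sum (fun i _ => by simp only [hp']; split <;> omega)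
          refine ⟨k, (Finset.mem_inter.mp hk).1, ?_⟩
          have hkS := (Finset.mem_inter.mp hk).2
          have := hSpos k hkS
          simp only [hp', if_pos hkS]
          omega
        have h9 := hload x
        rw [← hC] at h9
        omega
    -- conclude
    have hIH := ih p' s hload'
    have hsplit : ∑ i ∈ s, (p i : ℝ) * g (ℓ i)
        = ∑ i ∈ s, (p' i : ℝ) * g (ℓ i) + ∑ i ∈ S, g (ℓ i) := by
      have h1 : ∀ i ∈ s, (p i : ℝ) * g (ℓ i)
          = (p' i : ℝ) * g (ℓ i) + (if i ∈ S then g (ℓ i) else 0) := by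
        intro i _
        by_cases h : i ∈ S
        · simp only [hp', if_pos h]
          rw [Nat.cast_sub (hSpos i h)]
          push_cast
          ring
        · simp only [hp', if_neg h, add_zero]
      rw [Finset.sum_congr rfl h1, Finset.sum_add_distrib, Finset.sum_ite_mem,
        Finset.inter_eq_right.mpr hSs]
    rw [hsplit]
    have hg1 := greedy_g_sum g hg a ℓ hℓ ha hub s'
    push_cast
    rw [← hS] at hg1
    linarith

/-- The key 1-D lemma, real-weighted version. -/
lemma real_weighted_bound (g : ℝ → ℝ) (hg : IsWeighting g) (a ℓ lam : ι → ℝ)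
    (hℓ : ∀ i, 0 < ℓ i) (ha : ∀ i, 0 ≤ a i) (hub : ∀ i, a i + ℓ i ≤ 1)
    (hl0 : ∀ i, 0 ≤ lam i) (s : Finset ι)
    (hload : ∀ x : ℝ, ∑ i ∈ s.filter (fun i => a i ≤ x ∧ x < a i + ℓ i), lam i ≤ 1) :
    ∑ i ∈ s, lam i * g (ℓ i) ≤ 1 := by
  have hgb : ∀ i, 0 ≤ g (ℓ i) ∧ g (ℓ i) ≤ 1 :=
    fun i => hg.1 _ (hℓ i).le (by linarith [hub i, ha i])
  have key : ∀ q : ℕ, 0 < q → ∑ i ∈ s, lam i * g (ℓ i) ≤ 1 + s.card / q := by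
    intro q hq
    have hq' : (0:ℝ) < q := Nat.cast_pos.mpr hq
    set p := fun i => ⌊lam i * q⌋₊ with hp
    have hloadq : ∀ x : ℝ, ∑ i ∈ s.filter (fun i => a i ≤ x ∧ x < a i + ℓ i), p i ≤ q := by
      intro x
      have h1 : ((∑ i ∈ s.filter (fun i => a i ≤ x ∧ x < a i + ℓ i), p i : ℕ) : ℝ) ≤ q := by
        push_cast
        calc ∑ i ∈ s.filter (fun i => a i ≤ x ∧ x < a i + ℓ i), ((p i : ℕ) : ℝ)
            ≤ ∑ i ∈ s.filter (fun i => a i ≤ x ∧ x < a i + ℓ i), lam i * q :=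
              Finset.sum_le_sum (fun i _ => Nat.floor_le (mul_nonneg (hl0 i) hq'.le))
          _ = (∑ i ∈ s.filter (fun i => a i ≤ x ∧ x < a i + ℓ i), lam i) * q := by
              rw [Finset.sum_mul]
          _ ≤ 1 * q := mul_le_mul_of_nonneg_right (hload x) hq'.le
          _ = q := one_mul _
      exact_mod_cast h1
    have hb := nat_weighted_bound g hg a ℓ hℓ ha hub q p s hloadq
    have h2 : ∀ i ∈ s, lam i * g (ℓ i) ≤ ((p i : ℝ) + 1) / q * g (ℓ i) := by
      intro i _
      apply mul_le_mul_of_nonneg_right _ (hgb i).1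
      rw [le_div_iff₀ hq']
      exact (Nat.lt_floor_add_one (lam i * q)).le
    have h3 : ∑ i ∈ s, ((p i : ℝ) + 1) / q * g (ℓ i)
        = ((∑ i ∈ s, (p i : ℝ) * g (ℓ i)) + ∑ i ∈ s, g (ℓ i)) / q := by
      rw [← Finset.sum_add_distrib, Finset.sum_div]
      refine Finset.sum_congr rfl (fun i _ => by ring)
    have h4 : ∑ i ∈ s, g (ℓ i) ≤ (s.card : ℝ) := by
      calc ∑ i ∈ s, g (ℓ i) ≤ ∑ i ∈ s, (1:ℝ) := Finset.sum_le_sum (fun i _ => (hgb i).2)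
        _ = s.card := by simp
    calc ∑ i ∈ s, lam i * g (ℓ i) ≤ ∑ i ∈ s, ((p i : ℝ) + 1) / q * g (ℓ i) :=
          Finset.sum_le_sum h2
      _ = ((∑ i ∈ s, (p i : ℝ) * g (ℓ i)) + ∑ i ∈ s, g (ℓ i)) / q := h3
      _ ≤ ((q : ℝ) + s.card) / q := by
          gcongr
      _ = 1 + s.card / q := by field_simp
  refine le_of_forall_pos_le_add (fun ε hε => ?_)
  obtain ⟨q, hq1, hq2⟩ : ∃ q : ℕ, 0 < q ∧ (s.card : ℝ) / q ≤ ε := by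
    refine ⟨⌈(s.card : ℝ) / ε⌉₊ + 1, Nat.succ_pos _, ?_⟩
    have hqc : (s.card : ℝ) / ε ≤ (⌈(s.card : ℝ) / ε⌉₊ + 1 : ℕ) := by
      push_cast
      linarith [Nat.le_ceil ((s.card : ℝ) / ε)]
    have hqpos : (0:ℝ) < (⌈(s.card : ℝ) / ε⌉₊ + 1 : ℕ) := by positivity
    rw [div_le_iff₀ hqpos]
    calc (s.card : ℝ) = ((s.card : ℝ) / ε) * ε := by field_simp
      _ ≤ ((⌈(s.card : ℝ) / ε⌉₊ + 1 : ℕ) : ℝ) * ε := by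
          apply mul_le_mul_of_nonneg_right hqc hε.le
      _ = ε * ((⌈(s.card : ℝ) / ε⌉₊ + 1 : ℕ) : ℝ) := mul_comm _ _
  exact (key q hq1).trans (by linarith)

/-- Main fractional-packing bound, by induction on the dimension. -/
lemma main_bound : ∀ (k : ℕ) (g : Fin k → ℝ → ℝ), (∀ j, IsWeighting (g j)) →
    ∀ (v ℓ : ι → Fin k → ℝ), (∀ i j, 0 ≤ v i j) → (∀ i j, 0 < ℓ i j) →
    (∀ i j, v i j + ℓ i j ≤ 1) →
    ∀ (lam : ι → ℝ), (∀ i, 0 ≤ lam i) → (∀ i, lam i ≤ 1) →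
    ∀ s : Finset ι,
    (∀ x : Fin k → ℝ,
      ∑ i ∈ s.filter (fun i => ∀ j, v i j ≤ x j ∧ x j < v i j + ℓ i j), lam i ≤ 1) →
    ∑ i ∈ s, lam i * ∏ j, g j (ℓ i j) ≤ 1 := by
  intro k
  induction k with
  | zero =>
    intro g hg v ℓ hv hℓ hub lam hl0 hl1 s hload
    have h1 := hload (fun j => j.elim0)
    rw [Finset.filter_true_of_mem (fun i _ => fun j => j.elim0)] at h1
    calc ∑ i ∈ s, lam i * ∏ j : Fin 0, g j (ℓ i j)
        = ∑ i ∈ s, lam i := by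
          refine Finset.sum_congr rfl (fun i _ => by simp)
      _ ≤ 1 := h1
  | succ k ih =>
    intro g hg v ℓ hv hℓ hub lam hl0 hl1 s hload
    set G : Fin k → ℝ → ℝ := fun j => g j.castSucc with hG
    set v' : ι → Fin k → ℝ := fun i j => v i j.castSucc with hv'
    set ℓ' : ι → Fin k → ℝ := fun i j => ℓ i j.castSucc with hℓ'
    set lam' : ι → ℝ := fun i => lam i * g (Fin.last k) (ℓ i (Fin.last k)) with hlam'
    have hgb : ∀ i, 0 ≤ g (Fin.last k) (ℓ i (Fin.last k)) ∧
        g (Fin.last k) (ℓ i (Fin.last k)) ≤ 1 := fun i =>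
      (hg (Fin.last k)).1 _ (hℓ i (Fin.last k)).le
        (by linarith [hub i (Fin.last k), hv i (Fin.last k)])
    have hload' : ∀ x : Fin k → ℝ,
        ∑ i ∈ s.filter (fun i => ∀ j, v' i j ≤ x j ∧ x j < v' i j + ℓ' i j), lam' i ≤ 1 := by
      intro x
      set A := s.filter (fun i => ∀ j, v' i j ≤ x j ∧ x j < v' i j + ℓ' i j) with hA
      have := real_weighted_bound (g (Fin.last k)) (hg (Fin.last k))
        (fun i => v i (Fin.last k)) (fun i => ℓ i (Fin.last k)) lam
        (fun i => hℓ i (Fin.last k)) (fun i => hv i (Fin.last k))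
        (fun i => hub i (Fin.last k)) hl0 A ?_
      · exact this
      · intro t
        have hfe : A.filter (fun i => v i (Fin.last k) ≤ t ∧ t < v i (Fin.last k) + ℓ i (Fin.last k))
            = s.filter (fun i => ∀ j, v i j ≤ (Fin.snoc x t : Fin (k+1) → ℝ) j ∧ (Fin.snoc x t : Fin (k+1) → ℝ) j < v i j + ℓ i j) := by
          rw [hA, Finset.filter_filter]
          refine Finset.filter_congr (fun i _ => ?_)
          rw [Fin.forall_fin_succ' (P := fun j => v i j ≤ (Fin.snoc x t : Fin (k+1) → ℝ) j ∧ (Fin.snoc x t : Fin (k+1) → ℝ) j < v i j + ℓ i j)]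
          simp only [Fin.snoc_castSucc, Fin.snoc_last, hv', hℓ']
        rw [hfe]
        exact hload (Fin.snoc x t)
    have hIH := ih G (fun j => hg j.castSucc) v' ℓ' (fun i j => hv i j.castSucc)
      (fun i j => hℓ i j.castSucc) (fun i j => hub i j.castSucc) lam'
      (fun i => mul_nonneg (hl0 i) (hgb i).1)
      (fun i => mul_le_one₀ (hl1 i) (hgb i).1 (hgb i).2) s hload'
    calc ∑ i ∈ s, lam i * ∏ j, g j (ℓ i j)
        = ∑ i ∈ s, lam' i * ∏ j, G j (ℓ' i j) := by
          refine Finset.sum_congr rfl (fun i _ => ?_)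
          rw [Fin.prod_univ_castSucc (f := fun j => g j (ℓ i j))]
          simp only [hlam', hG, hℓ']
          ring
      _ ≤ 1 := hIH


end DffVolumeBound

open DffVolumeBound in
/-- Volume lower bound via weighting functions: if the `n` `d`-dimensional
items (side lengths `ℓ i j ∈ (0,1]`) can be packed into `m` unit-cube bins
(`b i` is the bin of item `i`; items in the same bin do not overlap in
positive volume), and `g j` are weighting functions, then
`Σ_i Π_j g j (ℓ i j) ≤ m`. -/
theorem dff_volume_bound (d n m : ℕ) (ℓ : Fin n → Fin d → ℝ)
    (hℓ : ∀ i j, 0 < ℓ i j ∧ ℓ i j ≤ 1)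
    (g : Fin d → ℝ → ℝ) (hg : ∀ j, IsWeighting (g j))
    (hpack : ∃ (b : Fin n → Fin m) (v : Fin n → Fin d → ℝ),
      (∀ i j, 0 ≤ v i j ∧ v i j + ℓ i j ≤ 1) ∧
      ∀ i i', i ≠ i' → b i = b i' →
        ∃ j, v i j + ℓ i j ≤ v i' j ∨ v i' j + ℓ i' j ≤ v i j) :
    ∑ i, ∏ j, g j (ℓ i j) ≤ (m : ℝ) := by
  obtain ⟨b, v, hbox, hsep⟩ := hpack
  have per : ∀ c : Fin m,
      ∑ i ∈ Finset.univ.filter (fun i => b i = c), ∏ j, g j (ℓ i j) ≤ 1 := by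
    intro c
    have hload : ∀ x : Fin d → ℝ,
        ∑ i ∈ (Finset.univ.filter (fun i => b i = c)).filter
          (fun i => ∀ j, v i j ≤ x j ∧ x j < v i j + ℓ i j), (1:ℝ) ≤ 1 := by
      intro x
      set T := (Finset.univ.filter (fun i => b i = c)).filter
        (fun i => ∀ j, v i j ≤ x j ∧ x j < v i j + ℓ i j) with hT
      have hT1 : T.card ≤ 1 := by
        rw [Finset.card_le_one]
        intro i hi i' hi'
        by_contra hne
        obtain ⟨j, hj⟩ := hsep i i' hne
          ((Finset.mem_filter.mp (Finset.mem_filter.mp hi).1).2.trans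
            (Finset.mem_filter.mp (Finset.mem_filter.mp hi').1).2.symm)
        have h1 := (Finset.mem_filter.mp hi).2 j
        have h2 := (Finset.mem_filter.mp hi').2 j
        rcases hj with h | h
        · linarith [h1.1, h1.2, h2.1, h2.2]
        · linarith [h1.1, h1.2, h2.1, h2.2]
      rw [Finset.sum_const, nsmul_eq_mul, mul_one]
      exact_mod_cast hT1
    have hmb := main_bound d g hg v ℓ (fun i j => (hbox i j).1) (fun i j => (hℓ i j).1)
      (fun i j => (hbox i j).2) (fun _ => (1:ℝ)) (fun _ => zero_le_one) (fun _ => le_refl 1)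
      (Finset.univ.filter (fun i => b i = c)) hload
    calc ∑ i ∈ Finset.univ.filter (fun i => b i = c), ∏ j, g j (ℓ i j)
        = ∑ i ∈ Finset.univ.filter (fun i => b i = c), (1:ℝ) * ∏ j, g j (ℓ i j) := by
          refine Finset.sum_congr rfl (fun i _ => (one_mul _).symm)
      _ ≤ 1 := hmb
  have hfib : ∑ c : Fin m, ∑ i ∈ Finset.univ.filter (fun i => b i = c), ∏ j, g j (ℓ i j)
      = ∑ i, ∏ j, g j (ℓ i j) := by
    rw [Finset.sum_fiberwise_eq_sum_filter Finset.univ Finset.univ b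
      (fun i => ∏ j, g j (ℓ i j))]
    simp
  calc ∑ i, ∏ j, g j (ℓ i j)
      = ∑ c : Fin m, ∑ i ∈ Finset.univ.filter (fun i => b i = c), ∏ j, g j (ℓ i j) :=
        hfib.symm
    _ ≤ ∑ _c : Fin m, (1:ℝ) := Finset.sum_le_sum (fun c _ => per c)
    _ = m := by simp
end
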